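/- arXiv:1302.2829 — 5 statements merged into one kernel-verified Lean document; each statement's English description precedes it below -/
import Mathlib

section
/- (Inequality (neri.5)) Let ν ∈ ℝ with 0 < ν ≤ 1/120, let s > 0 and e₁ ∈ ℝ. Define the set E := { x + iy − u·e^{−iν} : x ∈ [e₁ − s/4, e₁ + s/4], y ∈ [−(sin ν / 2)·s, (sin ν / 2)·s], u ∈ [0,∞) } ⊆ ℂ. Then for every z ∈ E with z ≠ e₁ and every r ∈ {0} ∪ [s, ∞): sin ν · |z − e₁| ≤ | z − r·e^{−iν} − e₁ |. -/
noncomputable section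

/-- The region `E = [e₁−s/4, e₁+s/4] + i[−(sin ν/2)s, (sin ν/2)s] − e^{−iν}[0,∞)`. -/
def regionE (ν s e1 : ℝ) : Set ℂ :=
  {w : ℂ | ∃ x ∈ Set.Icc (e1 - s/4) (e1 + s/4),
    ∃ y ∈ Set.Icc (-(Real.sin ν / 2 * s)) (Real.sin ν / 2 * s),
    ∃ u ∈ Set.Ici (0:ℝ),
      w = (x : ℂ) + (y : ℂ) * Complex.I - (u : ℂ) * Complex.exp (-Complex.I * ν)}

/-!
Write `z - e₁ = p - u ζ` with `ζ = e^{-iν}`, `u ≥ 0` and `p` in the rectangle. Multiplying by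
`ζ̄` is an isometry, so `|z - e₁| = |q - u|` and `|z - r ζ - e₁| = |q - (u + r)|` with `q = p ζ̄`.
The rectangle is so thin that `2 Re q ≤ s ≤ r`, so the real point `u + r` is at least as far from
`q` as `u` is. Hence even `|z - e₁| ≤ |z - r ζ - e₁|`, and the factor `sin ν ≤ 1` is free.
-/

open Complex ComplexConjugate

theorem Complex.norm_sub_ofReal_le_of_abs_re_sub_le {q : ℂ} {a b : ℝ}
    (h : |q.re - a| ≤ |q.re - b|) : ‖q - a‖ ≤ ‖q - b‖ := by
  rw [← abs_norm, ← abs_norm (q - b), ← sq_le_sq, Complex.sq_norm, Complex.sq_norm,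
    normSq_apply, normSq_apply]
  simp only [sub_re, ofReal_re, sub_im, ofReal_im, sub_zero]
  nlinarith [sq_le_sq.mpr h]

theorem norm_sub_mul_le_norm_sub_mul_sub_mul {p ζ : ℂ} (hζ : ‖ζ‖ = 1) {u r : ℝ}
    (hu : 0 ≤ u) (hr : 0 ≤ r) (hre : 2 * (p * conj ζ).re ≤ r) :
    ‖p - u * ζ‖ ≤ ‖p - u * ζ - r * ζ‖ := by
  have hζζ : ζ * conj ζ = 1 := by
    rw [mul_conj, ← Complex.sq_norm, hζ, one_pow, ofReal_one]
  have hrot : ∀ t : ℝ, ‖p - t * ζ‖ = ‖p * conj ζ - t‖ := fun t => by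
    rw [← mul_one ‖p - t * ζ‖, ← hζ, ← Complex.norm_conj ζ, ← norm_mul, sub_mul, mul_assoc, hζζ,
      mul_one]
  rw [sub_sub, ← add_mul, ← ofReal_add, hrot, hrot]
  apply Complex.norm_sub_ofReal_le_of_abs_re_sub_le
  rw [abs_sub_comm _ (u + r)]
  exact abs_le_abs (by linarith) (by linarith)

theorem nonneg_of_mem_regionE {ν s e1 : ℝ} {z : ℂ} (hz : z ∈ regionE ν s e1) : 0 ≤ s := by
  obtain ⟨x, ⟨hx₁, hx₂⟩, -⟩ := hz
  linarith

theorem exists_sub_eq_of_mem_regionE {ν s e1 : ℝ} {z : ℂ} (hsin₀ : 0 ≤ Real.sin ν)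
    (hsin : Real.sin ν ^ 2 ≤ 1 / 2) (hz : z ∈ regionE ν s e1) :
    ∃ p : ℂ, ∃ u : ℝ, 0 ≤ u ∧ 2 * (p * conj (exp (-I * ν))).re ≤ s ∧
      z - e1 = p - u * exp (-I * ν) := by
  have hs := nonneg_of_mem_regionE hz
  obtain ⟨x, ⟨hx₁, hx₂⟩, y, ⟨hy₁, -⟩, u, hu, rfl⟩ := hz
  refine ⟨(x - e1 : ℝ) + y * I, u, hu, ?_, by push_cast; ring⟩
  have hexp : -I * ν = (-ν : ℝ) * I := by push_cast; ring
  rw [hexp, mul_re, conj_re, conj_im, exp_ofReal_mul_I_re, exp_ofReal_mul_I_im, Real.cos_neg,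
    Real.sin_neg]
  simp only [add_re, ofReal_re, mul_re, I_re, mul_zero, ofReal_im, I_im, mul_one, sub_self,
    add_zero, add_im, mul_im, zero_add]
  have hx : |x - e1| ≤ s / 4 := abs_le.mpr ⟨by linarith, by linarith⟩
  have hxcos : (x - e1) * Real.cos ν ≤ s / 4 :=
    calc (x - e1) * Real.cos ν ≤ |x - e1| * |Real.cos ν| :=
        (le_abs_self _).trans_eq (abs_mul _ _)
      _ ≤ s / 4 * 1 := mul_le_mul hx (Real.abs_cos_le_one ν) (abs_nonneg _) (by linarith)
      _ = s / 4 := mul_one _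
  nlinarith [mul_le_mul_of_nonneg_left hy₁ hsin₀]

theorem neri5_general
    (ν : ℝ) (hν0 : 0 < ν) (hν : ν ≤ 1/120)
    (s : ℝ) (e1 : ℝ)
    (z : ℂ) (hz : z ∈ regionE ν s e1)
    (r : ℝ) (hr : r = 0 ∨ s ≤ r) :
    Real.sin ν * ‖z - e1‖
      ≤ ‖z - (r : ℂ) * Complex.exp (-Complex.I * ν) - e1‖ := by
  have hsin₀ : 0 ≤ Real.sin ν :=
    Real.sin_nonneg_of_nonneg_of_le_pi hν0.le (by linarith [Real.pi_gt_three])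
  have hsin : Real.sin ν ^ 2 ≤ 1 / 2 := by nlinarith [Real.sin_le hν0.le]
  obtain ⟨p, u, hu, hre, hzp⟩ := exists_sub_eq_of_mem_regionE hsin₀ hsin hz
  calc Real.sin ν * ‖z - e1‖ ≤ ‖z - e1‖ := mul_le_of_le_one_left (norm_nonneg _) (Real.sin_le_one ν)
    _ ≤ ‖z - (r : ℂ) * Complex.exp (-Complex.I * ν) - e1‖ := by
      rcases hr with rfl | hr
      · simp
      · rw [sub_right_comm, hzp]
        exact norm_sub_mul_le_norm_sub_mul_sub_mul (by simpa using norm_exp_I_mul_ofReal (-ν)) hu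
          ((nonneg_of_mem_regionE hz).trans hr) (hre.trans hr)

/-- Inequality (neri.5). -/
theorem neri5
    (ν : ℝ) (hν0 : 0 < ν) (hν : ν ≤ 1/120)
    (s : ℝ) (hs : 0 < s) (e1 : ℝ)
    (z : ℂ) (hz : z ∈ regionE ν s e1) (hz1 : z ≠ (e1 : ℂ))
    (r : ℝ) (hr : r = 0 ∨ s ≤ r) :
    Real.sin ν * ‖z - e1‖
      ≤ ‖z - (r : ℂ) * Complex.exp (-Complex.I * ν) - e1‖ :=
  neri5_general ν hν0 hν s e1 z hz r hr
end
end

section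
/- (Inequality (neri.14)) Let ν ∈ ℝ with 0 < ν ≤ 1/120, let s > 0 and e₁ ∈ ℝ. Define the set E := { x + iy − u·e^{−iν} : x ∈ [e₁ − s/4, e₁ + s/4], y ∈ [−(sin ν / 2)·s, (sin ν / 2)·s], u ∈ [0,∞) } ⊆ ℂ. Then for every z ∈ E with z ≠ e₁ and every r ∈ [s, ∞): r ≤ (1 + 1/sin ν) · | z − e₁ − r·e^{−iν} |. -/
noncomputable section

/-!
Write `w = z - e₁ - r e^{-iν} = (x - e₁) + iy - (u + r) e^{-iν}`. Then `‖w‖` dominates both `-Re w`,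
which is at least `(u + r) cos ν - s/4`, and `Im w`, which is at least `(u + r - s/2) sin ν`.
Hence `(1 + 1/sin ν) ‖w‖ ≥ r cos ν - s/4 + r - s/2`, and this is at least `r` because `cos ν ≥ 3/4`
for small `ν` and `s ≤ r`.
-/

lemma neg_re_add_im_div_le_mul_norm (w : ℂ) {σ : ℝ} (hσ : 0 < σ) :
    -w.re + w.im / σ ≤ (1 + 1 / σ) * ‖w‖ := by
  have hre : -w.re ≤ ‖w‖ := (neg_le_abs _).trans (Complex.abs_re_le_norm w)
  have him : w.im / σ ≤ ‖w‖ / σ :=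
    div_le_div_of_nonneg_right ((le_abs_self _).trans (Complex.abs_im_le_norm w)) hσ.le
  calc -w.re + w.im / σ ≤ ‖w‖ + ‖w‖ / σ := add_le_add hre him
    _ = (1 + 1 / σ) * ‖w‖ := by ring

lemma three_quarters_le_cos {ν : ℝ} (hν : ν ^ 2 ≤ 1 / 2) : 3 / 4 ≤ Real.cos ν := by
  linarith [Real.one_sub_sq_div_two_le_cos (x := ν)]

lemma re_im_bounds_of_mem_regionE {ν s e1 : ℝ} {z : ℂ} (hz : z ∈ regionE ν s e1) (r : ℝ)
    (hcos : 0 ≤ Real.cos ν) (hsin : 0 ≤ Real.sin ν) :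
    r * Real.cos ν - s / 4 ≤ -(z - e1 - r * Complex.exp (-Complex.I * ν)).re ∧
      (r - s / 2) * Real.sin ν ≤ (z - e1 - r * Complex.exp (-Complex.I * ν)).im := by
  obtain ⟨x, ⟨-, hx⟩, y, ⟨hy, -⟩, u, hu, rfl⟩ := hz
  have hexp_re : (Complex.exp (-Complex.I * ν)).re = Real.cos ν := by
    simp [Complex.exp_re]
  have hexp_im : (Complex.exp (-Complex.I * ν)).im = -Real.sin ν := by
    simp [Complex.exp_im]
  simp only [Complex.sub_re, Complex.sub_im, Complex.add_re, Complex.add_im, Complex.mul_re,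
    Complex.mul_im, Complex.ofReal_re, Complex.ofReal_im, Complex.I_re, Complex.I_im,
    hexp_re, hexp_im]
  rw [Set.mem_Ici] at hu
  constructor <;> nlinarith [mul_nonneg hu hcos, mul_nonneg hu hsin]

theorem neri14_general
    (ν : ℝ) (hν0 : 0 < ν) (hν : ν ≤ 1/120)
    (s : ℝ) (hs : 0 < s) (e1 : ℝ)
    (z : ℂ) (hz : z ∈ regionE ν s e1)
    (r : ℝ) (hr : s ≤ r) :
    r ≤ (1 + 1 / Real.sin ν) *
          ‖z - (e1 : ℂ) - (r : ℂ) * Complex.exp (-Complex.I * ν)‖ := by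
  set w := z - (e1 : ℂ) - (r : ℂ) * Complex.exp (-Complex.I * ν)
  have hsin : 0 < Real.sin ν :=
    Real.sin_pos_of_pos_of_lt_pi hν0 (by linarith [Real.pi_gt_three])
  have hcos : 3 / 4 ≤ Real.cos ν := three_quarters_le_cos (by nlinarith)
  obtain ⟨hre, him⟩ := re_im_bounds_of_mem_regionE hz r (by linarith) hsin.le
  have him' : r - s / 2 ≤ w.im / Real.sin ν := (le_div_iff₀ hsin).mpr him
  calc r ≤ (r * Real.cos ν - s / 4) + (r - s / 2) := by nlinarith
    _ ≤ -w.re + w.im / Real.sin ν := add_le_add hre him'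
    _ ≤ (1 + 1 / Real.sin ν) * ‖w‖ := neg_re_add_im_div_le_mul_norm w hsin

/-- Inequality (neri.14). -/
theorem neri14
    (ν : ℝ) (hν0 : 0 < ν) (hν : ν ≤ 1/120)
    (s : ℝ) (hs : 0 < s) (e1 : ℝ)
    (z : ℂ) (hz : z ∈ regionE ν s e1) (hz1 : z ≠ (e1 : ℂ))
    (r : ℝ) (hr : s ≤ r) :
    r ≤ (1 + 1 / Real.sin ν) *
          ‖z - (e1 : ℂ) - (r : ℂ) * Complex.exp (-Complex.I * ν)‖ :=
  neri14_general ν hν0 hν s hs e1 z hz r hr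

end
end

section
/- (Half-plane resolvent-distance estimates (ei.12), (beq.2), (ei.18)) Let ν ∈ ℝ with 0 < ν ≤ 1/120, let σ > 0, and let E, z ∈ ℂ satisfy Im z ≥ Im E − (sin ν / 2)·σ. Then for every r ∈ [σ, ∞): (i) (sin ν / 2)·σ ≤ | z − E − r·e^{−iν} |; (ii) sin ν · |z − E| ≤ 2·| z − E − r·e^{−iν} |; and consequently (iii) (sin ν / 4)·( (sin ν / 2)·σ + |z − E| ) ≤ | z − E − r·e^{−iν} |. -/
/-!
Write `w = z - E` and `u = r e^{-iν}`, so `|u| = r` and `Im u = -r sin ν`. Since `σ ≤ r`, the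
hypothesis gives `Im w ≥ -(r sin ν)/2`, hence `Im (w - u) ≥ (r sin ν)/2 ≥ (σ sin ν)/2`, which
is (i). For (ii), with `k = sin ν / 2`, the Apollonius set `{w : |w - u| < k |w|}` is the disc of
centre `u / (1 - k²)` and radius `k r / (1 - k²)`, which lies below the line `Im w = -(r sin ν)/2`.
-/

open Complex

noncomputable section

lemma neg_I_mul_ofReal (ν : ℝ) : -I * ν = ((-ν : ℝ) : ℂ) * I := by
  push_cast; ring

lemma im_ofReal_mul_exp_neg_I_mul (r ν : ℝ) :
    ((r : ℂ) * exp (-I * ν)).im = -(r * Real.sin ν) := by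
  rw [im_ofReal_mul, neg_I_mul_ofReal, exp_ofReal_mul_I_im, Real.sin_neg, mul_neg]

lemma norm_ofReal_mul_exp_neg_I_mul {r : ℝ} (hr : 0 ≤ r) (ν : ℝ) :
    ‖(r : ℂ) * exp (-I * ν)‖ = r := by
  rw [norm_mul, neg_I_mul_ofReal, norm_exp_ofReal_mul_I, mul_one, norm_real,
    Real.norm_of_nonneg hr]

lemma normSq_apollonius (w u : ℂ) (k : ℝ) :
    (1 - k ^ 2) * (normSq (w - u) - k ^ 2 * normSq w)
      = normSq ((1 - k ^ 2 : ℝ) * w - u) - k ^ 2 * normSq u := by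
  simp only [normSq_apply, sub_re, sub_im, re_ofReal_mul, im_ofReal_mul]
  ring

lemma mul_norm_le_norm_sub_of_im_le {w u : ℂ} {k : ℝ} (hk₀ : 0 ≤ k) (hk₁ : k < 1)
    (h : u.im + k * ‖u‖ ≤ (1 - k ^ 2) * w.im) : k * ‖w‖ ≤ ‖w - u‖ := by
  have hk : 0 < 1 - k ^ 2 := by nlinarith
  have hv : k * ‖u‖ ≤ ‖((1 - k ^ 2 : ℝ) : ℂ) * w - u‖ := calc
    k * ‖u‖ ≤ (((1 - k ^ 2 : ℝ) : ℂ) * w - u).im := by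
      rw [sub_im, im_ofReal_mul]; linarith
    _ ≤ _ := im_le_norm _
  have key := normSq_apollonius w u k
  simp only [← Complex.sq_norm] at key
  have hprod : 0 ≤ (1 - k ^ 2) * (‖w - u‖ ^ 2 - k ^ 2 * ‖w‖ ^ 2) := by
    rw [key, sub_nonneg, ← mul_pow]
    exact pow_le_pow_left₀ (by positivity) hv 2
  have hsq : (k * ‖w‖) ^ 2 ≤ ‖w - u‖ ^ 2 := by
    rw [mul_pow]
    linarith [nonneg_of_mul_nonneg_right hprod hk]
  exact (pow_le_pow_iff_left₀ (by positivity) (norm_nonneg _) two_ne_zero).mp hsq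

/-- Half-plane resolvent-distance estimates (ei.12), (beq.2), (ei.18). -/
theorem halfplane_estimates
    (ν : ℝ) (hν0 : 0 < ν) (hν : ν ≤ 1/120)
    (σ : ℝ) (hσ : 0 < σ)
    (E z : ℂ) (hz : E.im - Real.sin ν / 2 * σ ≤ z.im)
    (r : ℝ) (hr : σ ≤ r) :
    Real.sin ν / 2 * σ ≤ ‖z - E - (r : ℂ) * Complex.exp (-Complex.I * ν)‖ ∧
    Real.sin ν * ‖z - E‖
      ≤ 2 * ‖z - E - (r : ℂ) * Complex.exp (-Complex.I * ν)‖ ∧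
    Real.sin ν / 4 * (Real.sin ν / 2 * σ + ‖z - E‖)
      ≤ ‖z - E - (r : ℂ) * Complex.exp (-Complex.I * ν)‖ := by
  set w := z - E
  set u := (r : ℂ) * exp (-I * ν)
  set s := Real.sin ν
  have hs₀ : 0 ≤ s :=
    Real.sin_nonneg_of_nonneg_of_le_pi hν0.le (by linarith [Real.pi_gt_three])
  have hs₁ : s ≤ 1 := Real.sin_le_one ν
  have hr₀ : 0 ≤ r := hσ.le.trans hr
  have hu_im : u.im = -(r * s) := im_ofReal_mul_exp_neg_I_mul r ν
  have hw_im : -(r * s / 2) ≤ w.im := by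
    have : z.im - E.im = w.im := (sub_im z E).symm
    nlinarith
  have hi : s / 2 * σ ≤ ‖w - u‖ := calc
    s / 2 * σ ≤ (w - u).im := by rw [sub_im, hu_im]; nlinarith
    _ ≤ ‖w - u‖ := im_le_norm _
  have hii : s / 2 * ‖w‖ ≤ ‖w - u‖ := by
    refine mul_norm_le_norm_sub_of_im_le (by positivity) (by linarith) ?_
    rw [hu_im, norm_ofReal_mul_exp_neg_I_mul hr₀]
    have hk : 0 ≤ 1 - (s / 2) ^ 2 := by nlinarith
    nlinarith [mul_le_mul_of_nonneg_left hw_im hk,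
      mul_nonneg (sq_nonneg (s / 2)) (mul_nonneg hr₀ hs₀)]
  refine ⟨hi, by linarith, ?_⟩
  nlinarith [norm_nonneg (w - u)]

end
end

section
/- (Contour limit (T.e.1.e2tilde.1.0)) Let a, R ∈ ℝ with a < 0 and R > −a. Then lim_{ν → 0⁺} (1/(2πi)) ∫₀^R ( e^{−iν}/(a + e^{−iν} r) − e^{iν}/(a + e^{iν} r) ) dr = 1, i.e. the function ν ↦ (1/(2πi)) ∫₀^R ( e^{−iν}/(a + e^{−iν} r) − e^{iν}/(a + e^{iν} r) ) dr, defined for small ν > 0, tends to 1 as ν tends to 0 from the right. -/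
/-!
With `z = -a e^{iν}`, the integrand is `1/(r - z) - 1/(r - z̄) = 2i Im z / |r - z|²`, so the
integral is `2i` times the angle under which the segment `[0, R]` is seen from `z`, an explicit
difference of arctangents. As `ν → 0⁺`, `z` tends to the interior point `-a` of the segment from
the upper half-plane, and that angle tends to `π`.
-/

open Complex ComplexConjugate Filter Topology intervalIntegral

theorem one_div_sub_sub_one_div_sub_conj (z : ℂ) (r : ℝ) :
    1 / (r - z) - 1 / (r - conj z) = 2 * I * ((z.im / ((r - z.re) ^ 2 + z.im ^ 2) : ℝ) : ℂ) := by
  rw [one_div, one_div, inv_def, inv_def]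
  apply Complex.ext <;> simp [normSq_apply, -ofReal_div]
  ring

theorem hasDerivAt_arctan_sub_div {x y : ℝ} (hy : y ≠ 0) (r : ℝ) :
    HasDerivAt (fun r => Real.arctan ((r - x) / y)) (y / ((r - x) ^ 2 + y ^ 2)) r := by
  refine (((hasDerivAt_id' r).sub_const x).div_const y).arctan.congr_deriv ?_
  field_simp
  ring

theorem integral_one_div_sub_sub_one_div_sub_conj {z : ℂ} (hz : z.im ≠ 0) (a b : ℝ) :
    ∫ r in a..b, (1 / (r - z) - 1 / (r - conj z)) =
      2 * I * (Real.arctan ((b - z.re) / z.im) - Real.arctan ((a - z.re) / z.im) : ℝ) := by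
  simp_rw [one_div_sub_sub_one_div_sub_conj]
  rw [integral_const_mul, integral_ofReal,
    integral_eq_sub_of_hasDerivAt (fun r _ => hasDerivAt_arctan_sub_div hz r)]
  exact (continuous_const.div (by fun_prop) fun r => by positivity).intervalIntegrable _ _

section UpperHalfPlane

variable {x c : ℝ}

theorem tendsto_im_nhdsWithin_upperHalf (x : ℝ) :
    Tendsto im (𝓝[{z | 0 < z.im}] (x : ℂ)) (𝓝[>] 0) :=
  tendsto_nhdsWithin_iff.2
    ⟨by simpa using (continuous_im.tendsto (x : ℂ)).mono_left nhdsWithin_le_nhds,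
      eventually_nhdsWithin_of_forall fun _ hz => hz⟩

theorem tendsto_sub_re_nhdsWithin_upperHalf (x c : ℝ) :
    Tendsto (fun z : ℂ => c - z.re) (𝓝[{z | 0 < z.im}] (x : ℂ)) (𝓝 (c - x)) :=
  ((by fun_prop : Continuous fun z : ℂ => c - z.re).tendsto' _ _ (by simp)).mono_left
    nhdsWithin_le_nhds

theorem tendsto_sub_re_div_im_atTop (hx : x < c) :
    Tendsto (fun z : ℂ => (c - z.re) / z.im) (𝓝[{z | 0 < z.im}] (x : ℂ)) atTop := by
  simpa [div_eq_mul_inv] using (tendsto_sub_re_nhdsWithin_upperHalf x c).pos_mul_atTop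
    (sub_pos.2 hx) (tendsto_im_nhdsWithin_upperHalf x).inv_tendsto_nhdsGT_zero

theorem tendsto_sub_re_div_im_atBot (hc : c < x) :
    Tendsto (fun z : ℂ => (c - z.re) / z.im) (𝓝[{z | 0 < z.im}] (x : ℂ)) atBot := by
  simpa [div_eq_mul_inv] using (tendsto_sub_re_nhdsWithin_upperHalf x c).neg_mul_atTop
    (sub_neg.2 hc) (tendsto_im_nhdsWithin_upperHalf x).inv_tendsto_nhdsGT_zero

end UpperHalfPlane

theorem tendsto_integral_one_div_sub_sub_one_div_sub_conj {a b x : ℝ} (hax : a < x)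
    (hxb : x < b) :
    Tendsto (fun z : ℂ => ∫ r in a..b, (1 / (r - z) - 1 / (r - conj z)))
      (𝓝[{z | 0 < z.im}] (x : ℂ)) (𝓝 (2 * Real.pi * I)) := by
  have hangle : Tendsto
      (fun z : ℂ => Real.arctan ((b - z.re) / z.im) - Real.arctan ((a - z.re) / z.im))
      (𝓝[{z | 0 < z.im}] (x : ℂ)) (𝓝 (Real.pi / 2 - -(Real.pi / 2))) :=
    ((Real.tendsto_arctan_atTop.mono_right nhdsWithin_le_nhds).comp
      (tendsto_sub_re_div_im_atTop hxb)).sub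
    ((Real.tendsto_arctan_atBot.mono_right nhdsWithin_le_nhds).comp
      (tendsto_sub_re_div_im_atBot hax))
  refine Tendsto.congr' (eventually_nhdsWithin_of_forall fun z hz =>
    (integral_one_div_sub_sub_one_div_sub_conj (ne_of_gt hz) a b).symm) ?_
  rw [show 2 * Real.pi * I = 2 * I * ((Real.pi / 2 - -(Real.pi / 2) : ℝ) : ℂ) by push_cast; ring]
  exact ((continuous_ofReal.tendsto _).comp hangle).const_mul (2 * I)

theorem tendsto_ofReal_mul_exp_nhdsGT {c : ℝ} (hc : 0 < c) :
    Tendsto (fun ν : ℝ => (c : ℂ) * exp (ν * I)) (𝓝[>] 0) (𝓝[{z | 0 < z.im}] (c : ℂ)) := by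
  refine tendsto_nhdsWithin_iff.2 ⟨?_, ?_⟩
  · exact ((by fun_prop : Continuous fun ν : ℝ => (c : ℂ) * exp (ν * I)).tendsto' _ _
      (by simp)).mono_left nhdsWithin_le_nhds
  · filter_upwards [Ioo_mem_nhdsGT Real.pi_pos] with ν hν
    simpa [exp_ofReal_mul_I_im] using mul_pos hc (Real.sin_pos_of_pos_of_lt_pi hν.1 hν.2)

theorem div_add_mul_eq_one_div {K : Type*} [Field K] {u : K} (hu : u ≠ 0) (a r : K) :
    u / (a + u * r) = 1 / (r + a * u⁻¹) := by
  rw [← one_div_div, add_div, mul_div_cancel_left₀ _ hu, div_eq_mul_inv a, add_comm]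

theorem contour_integrand_eq (a ν r : ℝ) :
    exp (-I * ν) / (a + exp (-I * ν) * r) - exp (I * ν) / (a + exp (I * ν) * r) =
      1 / (r - ((-a : ℝ) : ℂ) * exp (ν * I)) - 1 / (r - conj (((-a : ℝ) : ℂ) * exp (ν * I))) := by
  have hexp : exp (-I * ν) = (exp (ν * I))⁻¹ := by rw [← exp_neg, neg_mul, mul_comm]
  rw [hexp, div_add_mul_eq_one_div (inv_ne_zero (exp_ne_zero _)), inv_inv, mul_comm I,
    div_add_mul_eq_one_div (exp_ne_zero _), map_mul, conj_ofReal, ← exp_conj, map_mul,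
    conj_ofReal, conj_I, mul_neg, exp_neg]
  push_cast
  ring

/-- Contour limit (T.e.1.e2tilde.1.0). -/
theorem contour_limit (a R : ℝ) (ha : a < 0) (hR : -a < R) :
    Filter.Tendsto
      (fun ν : ℝ => (1 / (2 * (Real.pi : ℂ) * Complex.I)) *
        ∫ r in (0:ℝ)..R,
          (Complex.exp (-Complex.I * (ν : ℂ)) /
              ((a : ℂ) + Complex.exp (-Complex.I * (ν : ℂ)) * (r : ℂ)) -
            Complex.exp (Complex.I * (ν : ℂ)) /
              ((a : ℂ) + Complex.exp (Complex.I * (ν : ℂ)) * (r : ℂ))))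
      (nhdsWithin 0 (Set.Ioi 0)) (nhds 1) := by
  have hlim := (tendsto_integral_one_div_sub_sub_one_div_sub_conj (neg_pos.2 ha) hR).comp
    (tendsto_ofReal_mul_exp_nhdsGT (neg_pos.2 ha))
  convert hlim.const_mul (1 / (2 * (Real.pi : ℂ) * I)) using 2 with ν
  · exact congrArg _ (integral_congr fun r _ => contour_integrand_eq a ν r)
  · field_simp [Real.pi_ne_zero, I_ne_zero]
end

section
/- (Rank-one projection norm bound (eb.1)) Let H be a complex Hilbert space, let P : H → H be a continuous linear map with P ∘ P = P whose range is one-dimensional, spanned by a vector φ ≠ 0 with Pφ = φ. Set c := ‖ P* ∘ (1 − P) ‖ (operator norm, P* the Hilbert-space adjoint of P), and assume c < 1. Then for every complex normed space K and every continuous linear map A : H → K: ‖ A ∘ P ‖ ≤ ‖Aφ‖ / ( ‖φ‖ · (1 − c²)^{1/2} ). -/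
/-!
Write `x = P x + (x - P x)`. Since `P` is idempotent, `⟪P x, x - P x⟫ = ⟪P x, P† (1 - P) (x - P x)⟫`,
so the cross term in `‖x‖²` is at most `c ‖P x‖ ‖x - P x‖` in modulus, and completing the square
gives `(1 - c²) ‖P x‖² ≤ ‖x‖²`, i.e. `‖P‖ ≤ (1 - c²)^{-1/2}`. As the range of `P` is the line
through `φ`, `A` scales every `P x` by the same factor `‖A φ‖ / ‖φ‖`, so `‖A P‖ ≤ ‖A φ‖ / ‖φ‖ · ‖P‖`.
-/

noncomputable section

open ContinuousLinearMap

section InnerProduct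

variable {𝕜 E : Type*} [RCLike 𝕜] [NormedAddCommGroup E] [InnerProductSpace 𝕜 E]

theorem one_sub_sq_mul_norm_sq_le_norm_add_sq {u v : E} {c : ℝ}
    (h : ‖(inner 𝕜 u v : 𝕜)‖ ≤ c * ‖u‖ * ‖v‖) :
    (1 - c ^ 2) * ‖u‖ ^ 2 ≤ ‖u + v‖ ^ 2 := by
  have hre : -(c * ‖u‖ * ‖v‖) ≤ RCLike.re (inner 𝕜 u v : 𝕜) :=
    neg_le_of_abs_le ((RCLike.abs_re_le_norm _).trans h)
  rw [norm_add_sq (𝕜 := 𝕜)]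
  nlinarith [sq_nonneg (‖v‖ - c * ‖u‖)]

variable [CompleteSpace E]

theorem norm_inner_apply_sub_apply_le_of_isIdempotentElem {P : E →L[𝕜] E}
    (hP : IsIdempotentElem P) (x : E) :
    ‖(inner 𝕜 (P x) (x - P x) : 𝕜)‖ ≤
      ‖(adjoint P).comp (ContinuousLinearMap.id 𝕜 E - P)‖ * ‖P x‖ * ‖x - P x‖ := by
  have hPPx : P (P x) = P x := congr($hP x)
  have hfix : (ContinuousLinearMap.id 𝕜 E - P) (x - P x) = x - P x := by
    simp only [sub_apply, id_apply, map_sub, hPPx, sub_self, sub_zero]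
  calc ‖(inner 𝕜 (P x) (x - P x) : 𝕜)‖
      = ‖(inner 𝕜 (P x) ((adjoint P).comp (ContinuousLinearMap.id 𝕜 E - P) (x - P x)) : 𝕜)‖ := by
        rw [comp_apply, hfix, adjoint_inner_right, hPPx]
    _ ≤ ‖P x‖ * (‖(adjoint P).comp (ContinuousLinearMap.id 𝕜 E - P)‖ * ‖x - P x‖) :=
        (norm_inner_le_norm _ _).trans (by gcongr; exact le_opNorm _ _)
    _ = _ := by ring

theorem norm_apply_mul_sqrt_le_of_isIdempotentElem {P : E →L[𝕜] E} (hP : IsIdempotentElem P)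
    (x : E) :
    ‖P x‖ * √(1 - ‖(adjoint P).comp (ContinuousLinearMap.id 𝕜 E - P)‖ ^ 2) ≤ ‖x‖ := by
  have hsq := one_sub_sq_mul_norm_sq_le_norm_add_sq
    (norm_inner_apply_sub_apply_le_of_isIdempotentElem hP x)
  rw [add_sub_cancel] at hsq
  set c := ‖(adjoint P).comp (ContinuousLinearMap.id 𝕜 E - P)‖
  calc ‖P x‖ * √(1 - c ^ 2) = √(‖P x‖ ^ 2 * (1 - c ^ 2)) := by
        rw [Real.sqrt_mul (sq_nonneg _), Real.sqrt_sq (norm_nonneg _)]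
    _ ≤ √(‖x‖ ^ 2) := Real.sqrt_le_sqrt (by linarith)
    _ = ‖x‖ := Real.sqrt_sq (norm_nonneg _)

theorem opNorm_le_inv_sqrt_of_isIdempotentElem {P : E →L[𝕜] E} (hP : IsIdempotentElem P)
    (hc : ‖(adjoint P).comp (ContinuousLinearMap.id 𝕜 E - P)‖ < 1) :
    ‖P‖ ≤ (√(1 - ‖(adjoint P).comp (ContinuousLinearMap.id 𝕜 E - P)‖ ^ 2))⁻¹ := by
  set c := ‖(adjoint P).comp (ContinuousLinearMap.id 𝕜 E - P)‖
  have hc0 : 0 ≤ c := norm_nonneg _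
  have hs : 0 < √(1 - c ^ 2) := Real.sqrt_pos.2 (by nlinarith)
  refine opNorm_le_bound _ (inv_nonneg.2 hs.le) fun x => ?_
  rw [inv_mul_eq_div, le_div_iff₀ hs]
  exact norm_apply_mul_sqrt_le_of_isIdempotentElem hP x

end InnerProduct

theorem norm_apply_mul_norm_eq_of_mem_span_singleton {𝕜 F G : Type*} [RCLike 𝕜]
    [NormedAddCommGroup F] [NormedSpace 𝕜 F] [NormedAddCommGroup G] [NormedSpace 𝕜 G]
    (A : F →L[𝕜] G) {φ v : F} (hv : v ∈ Submodule.span 𝕜 {φ}) :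
    ‖A v‖ * ‖φ‖ = ‖v‖ * ‖A φ‖ := by
  obtain ⟨k, rfl⟩ := Submodule.mem_span_singleton.1 hv
  rw [map_smul, norm_smul, norm_smul]
  ring

theorem opNorm_comp_le_of_range_le_span_singleton {𝕜 E F G : Type*} [RCLike 𝕜]
    [NormedAddCommGroup E] [NormedSpace 𝕜 E] [NormedAddCommGroup F] [NormedSpace 𝕜 F]
    [NormedAddCommGroup G] [NormedSpace 𝕜 G] (A : F →L[𝕜] G) {P : E →L[𝕜] F} {φ : F}
    (hφ : φ ≠ 0) (hrange : LinearMap.range (P : E →ₗ[𝕜] F) ≤ Submodule.span 𝕜 {φ}) :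
    ‖A.comp P‖ ≤ ‖A φ‖ / ‖φ‖ * ‖P‖ := by
  have hφ' : 0 < ‖φ‖ := norm_pos_iff.2 hφ
  refine opNorm_le_bound _ (by positivity) fun x => ?_
  have hscale : ‖A (P x)‖ = ‖A φ‖ / ‖φ‖ * ‖P x‖ := by
    rw [div_mul_eq_mul_div, eq_div_iff hφ'.ne', mul_comm ‖A φ‖]
    exact norm_apply_mul_norm_eq_of_mem_span_singleton A (hrange ⟨x, rfl⟩)
  rw [comp_apply, hscale, mul_assoc]
  gcongr
  exact le_opNorm _ _

theorem rank_one_projection_norm_bound_general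
    {H : Type*} [NormedAddCommGroup H] [InnerProductSpace ℂ H] [CompleteSpace H]
    {K : Type*} [NormedAddCommGroup K] [NormedSpace ℂ K]
    (P : H →L[ℂ] H) (hP : P.comp P = P)
    (φ : H) (hφ : φ ≠ 0)
    (hrange : LinearMap.range (P : H →ₗ[ℂ] H) = Submodule.span ℂ {φ})
    (c : ℝ)
    (hc : c = ‖(ContinuousLinearMap.adjoint P).comp
      (ContinuousLinearMap.id ℂ H - P)‖)
    (hc1 : c < 1)
    (A : H →L[ℂ] K) :
    ‖A.comp P‖ ≤ ‖A φ‖ / (‖φ‖ * Real.sqrt (1 - c ^ 2)) := by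
  calc ‖A.comp P‖ ≤ ‖A φ‖ / ‖φ‖ * ‖P‖ :=
        opNorm_comp_le_of_range_le_span_singleton A hφ hrange.le
    _ ≤ ‖A φ‖ / ‖φ‖ * (√(1 - c ^ 2))⁻¹ := by
        gcongr
        exact hc ▸ opNorm_le_inv_sqrt_of_isIdempotentElem hP (hc ▸ hc1)
    _ = _ := by rw [div_mul_eq_div_div, div_eq_mul_inv (‖A φ‖ / ‖φ‖)]

/-- Rank-one projection norm bound (eb.1). -/
theorem rank_one_projection_norm_bound
    {H : Type*} [NormedAddCommGroup H] [InnerProductSpace ℂ H] [CompleteSpace H]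
    {K : Type*} [NormedAddCommGroup K] [NormedSpace ℂ K]
    (P : H →L[ℂ] H) (hP : P.comp P = P)
    (φ : H) (hφ : φ ≠ 0) (hPφ : P φ = φ)
    (hrange : LinearMap.range (P : H →ₗ[ℂ] H) = Submodule.span ℂ {φ})
    (c : ℝ)
    (hc : c = ‖(ContinuousLinearMap.adjoint P).comp
      (ContinuousLinearMap.id ℂ H - P)‖)
    (hc1 : c < 1)
    (A : H →L[ℂ] K) :
    ‖A.comp P‖ ≤ ‖A φ‖ / (‖φ‖ * Real.sqrt (1 - c ^ 2)) :=
  rank_one_projection_norm_bound_general P hP φ hφ hrange c hc hc1 A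

end
end
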